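/- arXiv:2010.08293 — 2 statements merged into one kernel-verified Lean document; each statement's English description precedes it below -/
import Mathlib

section
/- Let (Ω,ℱ,P,{ℱ_t}_{t∈[0,T]}) be a filtered probability space satisfying the usual conditions, let p ≥ 2 and X ∈ L^p, and for each positive integer i ≤ p let X^{(i)}_t denote the i-th conditional cumulant of X given ℱ_t, defined recursively by X^{(1)}_t = E[X|ℱ_t] and X^{(n)}_t = E[X^n|ℱ_t] − B_n(X^{(1)}_t,…,X^{(n−1)}_t, 0) for n ≥ 2. Then for every positive integer n ≤ p and all 0 ≤ t ≤ u ≤ T, almost surely E[B_n(X^{(1)}_u − X^{(1)}_t, …, X^{(n)}_u − X^{(n)}_t) | ℱ_t] = 0. -/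
open MeasureTheory Finset

/-- The `n`-th complete Bell polynomial, defined as the `n`-th derivative at `z = 0` of
`exp (∑_{i=1}^n x_i z^i / i!)`.  Only `x 1, …, x n` are used. -/
noncomputable def bell (n : ℕ) (x : ℕ → ℝ) : ℝ :=
  iteratedDeriv n
    (fun z : ℝ => Real.exp (∑ i ∈ Finset.range n, x (i + 1) * z ^ (i + 1) / ((i + 1).factorial : ℝ))) 0

/-- The `n`-th conditional cumulant of `X` given the sub-σ-algebra `m`, defined recursively
by `X⁽¹⁾ = E[X|m]` and `X⁽ⁿ⁾ = E[Xⁿ|m] − B_n(X⁽¹⁾,…,X⁽ⁿ⁻¹⁾,0)` for `n ≥ 2`. -/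
noncomputable def condCumulant {Ω : Type*} {m0 : MeasurableSpace Ω} (μ : Measure Ω)
    (m : MeasurableSpace Ω) (X : Ω → ℝ) : ℕ → Ω → ℝ
  | 0 => fun _ => 1
  | 1 => μ[X|m]
  | n + 2 => μ[(fun ω => X ω ^ (n + 2))|m] - fun ω =>
      bell (n + 2) fun i => if h : 1 ≤ i ∧ i ≤ n + 1 then condCumulant μ m X i ω else 0
termination_by n => n
decreasing_by omega

/-!
Write `Kₛ = (X⁽¹⁾ₛ, X⁽²⁾ₛ, …)` and `Yₖ = Bₖ(Kᵤ - Kₜ)`. By construction of the cumulants,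
`Bⱼ(Kₛ) = E[Xʲ | ℱₛ]` for `j ≥ 1`, and complete Bell polynomials are of binomial type,
`Bₙ(x + y) = ∑ₖ C(n,k) Bₖ(x) Bₙ₋ₖ(y)`, because the exponential of a sum is the product of the
exponentials. Splitting `Kᵤ = (Kᵤ - Kₜ) + Kₜ` therefore gives
`E[Xⁿ | ℱᵤ] = E[Xⁿ | ℱₜ] + ∑_{0<k<n} C(n,k) Yₖ E[Xⁿ⁻ᵏ | ℱₜ] + Yₙ`.
Conditioning on `ℱₜ`, the tower property, pulling out the `ℱₜ`-measurable factors and strong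
induction on `n` leave `E[Yₙ | ℱₜ] = 0`. All terms are integrable because `n ≤ p`: by Hölder,
`X⁽ⁱ⁾ₛ ∈ L^{p/i}` and `Yₖ ∈ L^{p/k}`.
-/

open scoped ENNReal

noncomputable def bellExponent (N : ℕ) (x : ℕ → ℝ) (z : ℝ) : ℝ :=
  ∑ i ∈ range N, x (i + 1) * z ^ (i + 1) / ((i + 1).factorial : ℝ)

@[fun_prop]
lemma contDiff_bellExponent (N : ℕ) (x : ℕ → ℝ) (k : WithTop ℕ∞) :
    ContDiff ℝ k (bellExponent N x) := by
  unfold bellExponent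
  fun_prop

lemma bellExponent_zero (N : ℕ) (x : ℕ → ℝ) : bellExponent N x 0 = 0 := by
  simp [bellExponent]

lemma bellExponent_add (N : ℕ) (x y : ℕ → ℝ) (z : ℝ) :
    bellExponent N (x + y) z = bellExponent N x z + bellExponent N y z := by
  simp only [bellExponent, ← sum_add_distrib, Pi.add_apply]
  exact sum_congr rfl fun _ _ => by ring

lemma iteratedDeriv_succ_bellExponent_zero (N k : ℕ) (x : ℕ → ℝ) :
    iteratedDeriv (k + 1) (bellExponent N x) 0 = if k < N then x (k + 1) else 0 := by
  unfold bellExponent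
  rw [iteratedDeriv_fun_sum fun i _ => by fun_prop]
  simp only [iteratedDeriv_div_const, iteratedDeriv_const_mul_field, iteratedDeriv_fun_pow_zero]
  simp only [Nat.cast_ite, Nat.cast_zero, mul_ite, mul_zero, ite_div, zero_div, add_left_inj,
    sum_ite_eq, mem_range]
  split_ifs <;> field_simp

lemma iteratedDeriv_succ_exp_bellExponent (N j : ℕ) (x : ℕ → ℝ) :
    iteratedDeriv (j + 1) (fun z => Real.exp (bellExponent N x z)) 0 =
      ∑ k ∈ range (j + 1), (j.choose k : ℝ) * (if k < N then x (k + 1) else 0) *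
        iteratedDeriv (j - k) (fun z => Real.exp (bellExponent N x z)) 0 := by
  have hderiv : deriv (fun z => Real.exp (bellExponent N x z)) =
      fun z => deriv (bellExponent N x) z * Real.exp (bellExponent N x z) := by
    funext z
    rw [deriv_exp ((contDiff_bellExponent N x 1).differentiable one_ne_zero z), mul_comm]
  rw [iteratedDeriv_succ', hderiv, iteratedDeriv_fun_mul (by fun_prop) (by fun_prop)]
  refine sum_congr rfl fun k _ => ?_
  rw [← iteratedDeriv_succ', iteratedDeriv_succ_bellExponent_zero]

lemma bell_eq_iteratedDeriv (n : ℕ) (x : ℕ → ℝ) :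
    bell n x = iteratedDeriv n (fun z => Real.exp (bellExponent n x z)) 0 := rfl

lemma iteratedDeriv_exp_bellExponent {j N : ℕ} (hjN : j ≤ N) (x : ℕ → ℝ) :
    iteratedDeriv j (fun z => Real.exp (bellExponent N x z)) 0 = bell j x := by
  induction j using Nat.strong_induction_on generalizing N with
  | _ j ih =>
  rcases j with _ | j
  · simp [bell_eq_iteratedDeriv, bellExponent_zero]
  rw [bell_eq_iteratedDeriv, iteratedDeriv_succ_exp_bellExponent,
    iteratedDeriv_succ_exp_bellExponent]
  refine sum_congr rfl fun k hk => ?_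
  have hkj : k < j + 1 := mem_range.1 hk
  rw [if_pos (by omega), if_pos hkj, ih (j - k) (by omega) (by omega),
    ih (j - k) (by omega) (by omega)]

lemma bell_zero (x : ℕ → ℝ) : bell 0 x = 1 := by
  simp [bell]

lemma bell_succ (n : ℕ) (x : ℕ → ℝ) :
    bell (n + 1) x = ∑ k ∈ range (n + 1), (n.choose k : ℝ) * x (k + 1) * bell (n - k) x := by
  rw [bell_eq_iteratedDeriv, iteratedDeriv_succ_exp_bellExponent]
  refine sum_congr rfl fun k hk => ?_
  rw [if_pos (mem_range.1 hk), iteratedDeriv_exp_bellExponent (by omega)]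

lemma bell_one (x : ℕ → ℝ) : bell 1 x = x 1 := by
  simp [bell_succ, bell_zero]

lemma bell_congr {n : ℕ} {x y : ℕ → ℝ} (h : ∀ i, 1 ≤ i → i ≤ n → x i = y i) :
    bell n x = bell n y := by
  simp only [bell_eq_iteratedDeriv, bellExponent]
  congr! 4 with z i hi
  rw [h (i + 1) (by omega) (mem_range.1 hi)]

lemma bell_add (n : ℕ) (x y : ℕ → ℝ) :
    bell n (x + y) = ∑ k ∈ range (n + 1), (n.choose k : ℝ) * bell k x * bell (n - k) y := by
  rw [bell_eq_iteratedDeriv]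
  simp only [bellExponent_add, Real.exp_add]
  rw [iteratedDeriv_fun_mul (by fun_prop) (by fun_prop)]
  refine sum_congr rfl fun k hk => ?_
  have hkn : k ≤ n := Nat.lt_succ_iff.1 (mem_range.1 hk)
  rw [iteratedDeriv_exp_bellExponent hkn, iteratedDeriv_exp_bellExponent (Nat.sub_le n k)]

lemma bell_eq_add_bell_update {n : ℕ} (hn : 1 ≤ n) (x : ℕ → ℝ) :
    bell n x = x n + bell n (Function.update x n 0) := by
  obtain ⟨m, rfl⟩ : ∃ m, n = m + 1 := ⟨n - 1, by omega⟩
  rw [bell_succ, bell_succ, sum_range_succ, sum_range_succ, Function.update_self]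
  have hlow : ∀ k ∈ range m, (m.choose k : ℝ) * Function.update x (m + 1) 0 (k + 1) *
      bell (m - k) (Function.update x (m + 1) 0) = m.choose k * x (k + 1) * bell (m - k) x := by
    intro k hk
    have hkm : k < m := mem_range.1 hk
    rw [Function.update_of_ne (by omega),
      bell_congr fun i _ hi => Function.update_of_ne (by omega) _ _]
  rw [sum_congr rfl hlow]
  simp [bell_zero]
  ring

section Integrability

variable {Ω : Type*} {m0 : MeasurableSpace Ω} {μ : Measure Ω} {P : ℝ≥0∞}

lemma ENNReal.one_le_div_natCast {j : ℕ} (hj : j ≠ 0) (hjP : (j : ℝ≥0∞) ≤ P) : 1 ≤ P / j := by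
  rwa [ENNReal.le_div_iff_mul_le (Or.inl (by exact_mod_cast hj))
    (Or.inl (ENNReal.natCast_ne_top j)), one_mul]

lemma ENNReal.holderTriple_div_natCast (P : ℝ≥0∞) (a b : ℕ) :
    ENNReal.HolderTriple (P / a) (P / b) (P / (a + b : ℕ)) := by
  rcases eq_or_ne P 0 with rfl | hP
  · simp only [ENNReal.zero_div]
    infer_instance
  constructor
  simp only [ENNReal.inv_div (Or.inl (ENNReal.natCast_ne_top _)) (Or.inr hP)]
  rw [ENNReal.div_add_div_same, Nat.cast_add]

lemma MeasureTheory.MemLp.mul_div_natCast {f g : Ω → ℝ} {a b : ℕ} (hf : MemLp f (P / a) μ)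
    (hg : MemLp g (P / b) μ) : MemLp (fun ω => f ω * g ω) (P / (a + b : ℕ)) μ :=
  haveI := ENNReal.holderTriple_div_natCast P a b
  hg.mul' hf

lemma MeasureTheory.MemLp.pow_div_natCast {X : Ω → ℝ} (hX : MemLp X P μ) (j : ℕ) :
    MemLp (fun ω => X ω ^ j) (P / j) μ :=
  (hX.norm_rpow_div j).congr_norm ((hX.aestronglyMeasurable.pow j))
    (ae_of_all _ fun ω => by simp [Real.rpow_natCast])

lemma memLp_bell [IsFiniteMeasure μ] {n : ℕ} {x : Ω → ℕ → ℝ}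
    (hx : ∀ i, 1 ≤ i → i ≤ n → MemLp (fun ω => x ω i) (P / i) μ) :
    MemLp (fun ω => bell n (x ω)) (P / n) μ := by
  induction n using Nat.strong_induction_on with
  | _ n ih =>
  rcases n with _ | j
  · simp only [bell_zero]
    exact memLp_const 1
  simp only [bell_succ]
  refine memLp_finsetSum _ fun k hk => ?_
  have hkj : k < j + 1 := mem_range.1 hk
  have hsum : k + 1 + (j - k) = j + 1 := by omega
  have := MemLp.mul_div_natCast ((hx (k + 1) (by omega) (by omega)).const_mul (j.choose k : ℝ))
    (ih (j - k) (by omega) fun i hi hij => hx i hi (by omega))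
  rwa [hsum] at this

lemma memLp_condExp_pow {m : MeasurableSpace Ω} {X : Ω → ℝ} (hX : MemLp X P μ) {j : ℕ}
    (hj : 1 ≤ j) (hjP : (j : ℝ≥0∞) ≤ P) :
    MemLp (μ[(fun ω => X ω ^ j)|m]) (P / j) μ :=
  (hX.pow_div_natCast j).condExp (ENNReal.one_le_div_natCast (by omega) hjP)

lemma condExp_mul_eq_zero_of_condExp_eq_zero {m : MeasurableSpace Ω} {f g : Ω → ℝ}
    (hg : StronglyMeasurable[m] g) (hf : Integrable f μ) (hfg : Integrable (f * g) μ)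
    (hf0 : μ[f|m] =ᵐ[μ] 0) : μ[f * g|m] =ᵐ[μ] 0 := by
  filter_upwards [condExp_mul_of_stronglyMeasurable_right hg hfg hf, hf0] with ω hfg hf0
  simp [hfg, hf0]

end Integrability

section Cumulants

variable {Ω : Type*} {m0 : MeasurableSpace Ω}

lemma bell_condCumulant (μ : Measure Ω) (m : MeasurableSpace Ω) (X : Ω → ℝ) {j : ℕ} (hj : 1 ≤ j)
    (ω : Ω) : bell j (fun i => condCumulant μ m X i ω) = μ[(fun ω => X ω ^ j)|m] ω := by
  obtain rfl | ⟨k, rfl⟩ : j = 1 ∨ ∃ k, j = k + 2 := by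
    rcases j with _ | _ | k <;> simp_all
  · simp [bell_one, condCumulant]
  rw [bell_eq_add_bell_update (by omega), condCumulant]
  have htrunc : bell (k + 2) (Function.update (fun i => condCumulant μ m X i ω) (k + 2) 0) =
      bell (k + 2) fun i => if h : 1 ≤ i ∧ i ≤ k + 1 then condCumulant μ m X i ω else 0 := by
    refine bell_congr fun i hi hik => ?_
    rcases Nat.lt_or_eq_of_le hik with hik | rfl
    · rw [Function.update_of_ne (by omega), dif_pos ⟨hi, by omega⟩]
    · rw [Function.update_self, dif_neg (by omega)]
  rw [htrunc, Pi.sub_apply, sub_add_cancel]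

noncomputable def bellIncrement (μ : Measure Ω) (m m' : MeasurableSpace Ω) (X : Ω → ℝ) (n : ℕ)
    (ω : Ω) : ℝ :=
  bell n fun i => condCumulant μ m' X i ω - condCumulant μ m X i ω

lemma condExp_pow_eq_add_sum_bellIncrement (μ : Measure Ω) (m m' : MeasurableSpace Ω)
    (X : Ω → ℝ) {n : ℕ} (hn : 1 ≤ n) (ω : Ω) :
    μ[(fun ω => X ω ^ n)|m'] ω = μ[(fun ω => X ω ^ n)|m] ω +
      ∑ k ∈ Ico 1 n, (n.choose k : ℝ) * (bellIncrement μ m m' X k ω *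
        μ[(fun ω => X ω ^ (n - k))|m] ω) + bellIncrement μ m m' X n ω := by
  have hsplit : (fun i => condCumulant μ m' X i ω) =
      (fun i => condCumulant μ m' X i ω - condCumulant μ m X i ω) +
        fun i => condCumulant μ m X i ω := by
    funext i
    simp
  rw [← bell_condCumulant μ m' X hn ω, hsplit, bell_add, range_eq_Ico,
    sum_Ico_succ_top (Nat.zero_le n), sum_eq_sum_Ico_succ_bot (by omega)]
  have hmid : ∀ k ∈ Ico 1 n, (n.choose k : ℝ) *
      bell k (fun i => condCumulant μ m' X i ω - condCumulant μ m X i ω) *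
        bell (n - k) (fun i => condCumulant μ m X i ω) =
      n.choose k * (bellIncrement μ m m' X k ω * μ[(fun ω => X ω ^ (n - k))|m] ω) := by
    intro k hk
    rw [bell_condCumulant μ m X (Nat.sub_pos_of_lt (mem_Ico.1 hk).2), mul_assoc]
    rfl
  rw [sum_congr rfl hmid, bell_condCumulant μ m X (by omega)]
  simp [bell_zero, bellIncrement]

end Cumulants

section Martingale

variable {Ω : Type*} {m0 : MeasurableSpace Ω} {μ : Measure Ω} [IsFiniteMeasure μ] {P : ℝ≥0∞}
  {m m' : MeasurableSpace Ω} {X : Ω → ℝ}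

lemma memLp_condCumulant (hX : MemLp X P μ) {i : ℕ} (hi : 1 ≤ i) (hiP : (i : ℝ≥0∞) ≤ P) :
    MemLp (condCumulant μ m X i) (P / i) μ := by
  induction i using Nat.strong_induction_on with
  | _ i ih =>
  obtain rfl | ⟨k, rfl⟩ : i = 1 ∨ ∃ k, i = k + 2 := by
    rcases i with _ | _ | k <;> simp_all
  · rw [condCumulant, Nat.cast_one, div_one]
    exact hX.condExp (by exact_mod_cast hiP)
  rw [condCumulant]
  refine (memLp_condExp_pow hX hi hiP).sub (memLp_bell fun j hj hjk => ?_)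
  by_cases hjk' : j ≤ k + 1
  · simp only [dif_pos (And.intro hj hjk')]
    exact ih j (by omega) hj (le_trans (by exact_mod_cast hjk) hiP)
  · simp only [dif_neg (not_and_of_not_right _ hjk')]
    exact MemLp.zero

lemma memLp_bellIncrement (hX : MemLp X P μ) {n : ℕ} (hnP : (n : ℝ≥0∞) ≤ P) :
    MemLp (bellIncrement μ m m' X n) (P / n) μ :=
  memLp_bell fun i hi hin =>
    have hiP : (i : ℝ≥0∞) ≤ P := le_trans (by exact_mod_cast hin) hnP
    (memLp_condCumulant hX hi hiP).sub (memLp_condCumulant hX hi hiP)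

lemma integrable_bellIncrement (hX : MemLp X P μ) {k : ℕ} (hk : 1 ≤ k) (hkP : (k : ℝ≥0∞) ≤ P) :
    Integrable (bellIncrement μ m m' X k) μ :=
  (memLp_bellIncrement hX hkP).integrable (ENNReal.one_le_div_natCast (by omega) hkP)

lemma memLp_bellIncrement_mul_condExp_pow (hX : MemLp X P μ) {k n : ℕ} (hkn : k < n)
    (hnP : (n : ℝ≥0∞) ≤ P) :
    MemLp (bellIncrement μ m m' X k * μ[(fun ω => X ω ^ (n - k))|m]) (P / n) μ := by
  have hle {j : ℕ} (hj : j ≤ n) : (j : ℝ≥0∞) ≤ P := le_trans (by exact_mod_cast hj) hnP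
  have hmem := MemLp.mul_div_natCast (memLp_bellIncrement (m := m) (m' := m') hX (hle hkn.le))
    (memLp_condExp_pow (m := m) hX (Nat.sub_pos_of_lt hkn) (hle (Nat.sub_le n k)))
  rwa [Nat.add_sub_cancel' hkn.le] at hmem

theorem condExp_bellIncrement_eq_zero (hmm' : m ≤ m') (hm' : m' ≤ m0) (hX : MemLp X P μ)
    {n : ℕ} (hn : 1 ≤ n) (hnP : (n : ℝ≥0∞) ≤ P) :
    μ[bellIncrement μ m m' X n|m] =ᵐ[μ] 0 := by
  induction n using Nat.strong_induction_on with
  | _ n ih =>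
  set Y := bellIncrement μ m m' X
  set E : ℕ → Ω → ℝ := fun j => μ[(fun ω => X ω ^ j)|m]
  set S := ∑ k ∈ Ico 1 n, (n.choose k : ℝ) • (Y k * E (n - k))
  have hYE_int : ∀ k ∈ Ico 1 n, Integrable (Y k * E (n - k)) μ := fun k hk =>
    (memLp_bellIncrement_mul_condExp_pow hX (mem_Ico.1 hk).2 hnP).integrable
      (ENNReal.one_le_div_natCast (by omega) hnP)
  have hS_int : Integrable S μ :=
    integrable_finsetSum' _ fun k hk => (hYE_int k hk).smul (n.choose k : ℝ)
  have hS : μ[S|m] =ᵐ[μ] 0 := by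
    have hterm : ∀ k ∈ Ico 1 n, μ[(n.choose k : ℝ) • (Y k * E (n - k))|m] =ᵐ[μ] 0 := by
      intro k hk
      obtain ⟨hk1, hkn⟩ := mem_Ico.1 hk
      have hkP : (k : ℝ≥0∞) ≤ P := le_trans (by exact_mod_cast hkn.le) hnP
      filter_upwards [condExp_smul (m := m) (n.choose k : ℝ) (Y k * E (n - k)),
        condExp_mul_eq_zero_of_condExp_eq_zero (f := Y k) (g := E (n - k))
          stronglyMeasurable_condExp (integrable_bellIncrement hX hk1 hkP) (hYE_int k hk)
          (ih k hkn hk1 hkP)]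
        with ω hsmul hzero
      simp [hsmul, hzero]
    filter_upwards [condExp_finsetSum (fun k hk => (hYE_int k hk).smul (n.choose k : ℝ)) m,
      (Filter.eventually_all_finset _).2 hterm] with ω hsum hzero
    simp [S, hsum, Finset.sum_apply, sum_eq_zero hzero]
  have hdecomp : Y n = μ[(fun ω => X ω ^ n)|m'] - E n - S := by
    funext ω
    simp only [S, Pi.sub_apply, Finset.sum_apply, Pi.smul_apply, Pi.mul_apply, smul_eq_mul]
    linarith [condExp_pow_eq_add_sum_bellIncrement μ m m' X hn ω]
  calc μ[Y n|m] = μ[μ[(fun ω => X ω ^ n)|m'] - E n - S|m] := by rw [hdecomp]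
    _ =ᵐ[μ] μ[μ[(fun ω => X ω ^ n)|m']|m] - μ[E n|m] - μ[S|m] :=
        (condExp_sub (integrable_condExp.sub integrable_condExp) hS_int m).trans
          ((condExp_sub integrable_condExp integrable_condExp m).sub Filter.EventuallyEq.rfl)
    _ =ᵐ[μ] E n - E n - 0 :=
        ((condExp_condExp_of_le hmm' hm').sub
          (condExp_condExp_of_le le_rfl (hmm'.trans hm'))).sub hS
    _ = 0 := by simp

end Martingale

theorem condexp_bell_increment_eq_zero_general {Ω : Type*} {m0 : MeasurableSpace Ω}
    (μ : Measure Ω) [IsProbabilityMeasure μ] (F : Filtration ℝ m0)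
    (p : ℝ) (X : Ω → ℝ) (hX : MemLp X (ENNReal.ofReal p) μ)
    (n : ℕ) (hn : 1 ≤ n) (hnp : (n : ℝ) ≤ p)
    (t u : ℝ) (htu : t ≤ u) :
    μ[(fun ω => bell n fun i =>
        condCumulant μ (F u) X i ω - condCumulant μ (F t) X i ω)|F t] =ᵐ[μ] 0 :=
  condExp_bellIncrement_eq_zero (F.mono htu) (F.le u) hX hn
    ((ENNReal.natCast_le_ofReal (by omega)).2 hnp)

/-- Lemma 2: for `X ∈ L^p` on a filtered probability space satisfying the usual
conditions and a positive integer `n ≤ p`,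
`E[B_n(𝕏⁽ⁿ⁾_u − 𝕏⁽ⁿ⁾_t) | ℱ_t] = 0` a.s. for all `0 ≤ t ≤ u ≤ T`, where
`𝕏⁽ⁿ⁾ = (X⁽¹⁾,…,X⁽ⁿ⁾)` are the conditional cumulant processes. -/
theorem condexp_bell_increment_eq_zero {Ω : Type*} {m0 : MeasurableSpace Ω}
    (μ : Measure Ω) [IsProbabilityMeasure μ] (T : ℝ) (hT : 0 < T) (F : Filtration ℝ m0)
    -- the filtration satisfies the usual conditions: right-continuity and completeness
    (hRC : ∀ t : ℝ, 0 ≤ t → t < T → F t = ⨅ u ∈ Set.Ioc t T, F u)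
    (hCompl : ∀ s : Set Ω, MeasurableSet s → μ s = 0 → MeasurableSet[F 0] s)
    (p : ℝ) (hp : 2 ≤ p) (X : Ω → ℝ) (hX : MemLp X (ENNReal.ofReal p) μ)
    (n : ℕ) (hn : 1 ≤ n) (hnp : (n : ℝ) ≤ p)
    (t u : ℝ) (ht : 0 ≤ t) (htu : t ≤ u) (hu : u ≤ T) :
    μ[(fun ω => bell n fun i =>
        condCumulant μ (F u) X i ω - condCumulant μ (F t) X i ω)|F t] =ᵐ[μ] 0 :=
  condexp_bell_increment_eq_zero_general μ F p X hX n hn hnp t u htu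
end

section
/- Let (Ω,ℱ,P,{ℱ_t}_{t∈[0,T]}) be a filtered probability space with ℱ_0 consisting of null sets and their complements, and let M = {M_t}_{t∈[0,T]} be a martingale with E[|M_T|^4] < ∞. For each t, set M^{(2)}_t = E[(M_T − M_t)^2 | ℱ_t] and M^{(3)}_t = E[(M_T − M_t)^3 | ℱ_t]. Then for any partition 0 = t_0 < t_1 < ⋯ < t_N = T, the realized kurtosis satisfies E[ ∑_{j=1}^{N} { (ΔM_j)^4 + 6 (ΔM_j)^2 ΔM^{(2)}_j + 4 (ΔM_j) ΔM^{(3)}_j + 3 (ΔM^{(2)}_j)^2 } ] = E[(M_T − M_0)^4] − 3 (E[(M_T − M_0)^2])^2, where ΔF_j = F_{t_j} − F_{t_{j−1}} for a process F; that is, its expectation equals the fourth cumulant of M_T − M_0. -/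
/-!
Put `Φ(t) = E[(M_T - M_t)⁴] - 3 E[(M⁽²⁾_t)²]`. For `s ≤ u` write `M_T - M_s = A + Q` with
`A = M_u - M_s` and `Q = M_T - M_u`, so that `E[A | ℱ_s] = 0` and `E[Q | ℱ_u] = 0`. Expanding
`(A + Q)⁴` and pulling the `ℱ_u`-measurable powers of `A` out of `E[· | ℱ_u]` gives
`E[(A + Q)⁴] = E[A⁴] + 6 E[A² M⁽²⁾_u] + 4 E[A M⁽³⁾_u] + E[Q⁴]`, while the same orthogonality
applied to `(A + Q)²` gives `E[(M⁽²⁾_s)²] = E[M⁽²⁾_s A²] + E[M⁽²⁾_s M⁽²⁾_u]`. Together they say that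
the expected realized-kurtosis summand over `[s, u]` is `Φ(s) - Φ(u)`, so the sum telescopes to
`Φ(0) - Φ(T)`. Finally `Φ(T) = 0`, and as `ℱ_0` is trivial, `M⁽²⁾_0 = E[(M_T - M_0)²]` a.s.

Every product that occurs has total degree four, counting `A` and `Q` with degree one and
`E[Q^k | ·] ∈ L^{4/k}` with degree `k`, hence is integrable by Hölder's inequality.
-/

open MeasureTheory ProbabilityTheory
open scoped ENNReal

namespace ENNReal

instance : HolderTriple 4 4 2 where
  inv_add_inv_eq_inv := by
    rw [← toReal_eq_toReal_iff' (by simp) (by simp), toReal_add (by simp) (by simp)]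
    norm_num

instance : HolderTriple 2 4 (4 / 3) where
  inv_add_inv_eq_inv := by
    rw [← toReal_eq_toReal_iff' (by simp) (by simp), toReal_add (by simp) (by simp)]
    norm_num [toReal_div]

instance : HolderTriple 4 (4 / 3) 1 where
  inv_add_inv_eq_inv := by
    rw [← toReal_eq_toReal_iff' (by simp) (by simp), toReal_add (by simp) (by simp)]
    norm_num [toReal_div]

theorem one_le_four_div_three : (1 : ℝ≥0∞) ≤ 4 / 3 := by
  rw [ENNReal.le_div_iff_mul_le] <;> norm_num

end ENNReal

namespace MeasureTheory

variable {Ω : Type*} {m m0 : MeasurableSpace Ω} {μ : Measure Ω}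

theorem MemLp.sq_of_four {f : Ω → ℝ} (hf : MemLp f 4 μ) : MemLp (f ^ 2) 2 μ := by
  simpa only [sq] using hf.mul hf

theorem MemLp.cube_of_four {f : Ω → ℝ} (hf : MemLp f 4 μ) : MemLp (f ^ 3) (4 / 3) μ := by
  simpa only [← pow_succ] using hf.mul hf.sq_of_four

theorem MemLp.integrable_pow_four {f : Ω → ℝ} (hf : MemLp f 4 μ) : Integrable (f ^ 4) μ := by
  simpa only [← pow_add] using hf.sq_of_four.integrable_mul hf.sq_of_four

theorem integral_mul_condExp [IsFiniteMeasure μ] (hm : m ≤ m0) {g h : Ω → ℝ}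
    (hg : StronglyMeasurable[m] g) (hh : Integrable h μ) (hgh : Integrable (g * h) μ) :
    ∫ ω, g ω * μ[h|m] ω ∂μ = ∫ ω, g ω * h ω ∂μ :=
  calc ∫ ω, g ω * μ[h|m] ω ∂μ = ∫ ω, μ[g * h|m] ω ∂μ :=
        integral_congr_ae (condExp_mul_of_stronglyMeasurable_left hg hgh hh).symm
    _ = ∫ ω, g ω * h ω ∂μ := integral_condExp hm

theorem integral_mul_eq_zero_of_condExp_eq_zero [IsFiniteMeasure μ] (hm : m ≤ m0) {g h : Ω → ℝ}
    (hg : StronglyMeasurable[m] g) (hh : Integrable h μ) (hgh : Integrable (g * h) μ)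
    (h0 : μ[h|m] =ᵐ[μ] 0) : ∫ ω, g ω * h ω ∂μ = 0 := by
  rw [← integral_mul_condExp hm hg hh hgh]
  exact integral_eq_zero_of_ae (by filter_upwards [h0] with ω hω; simp [hω])

end MeasureTheory

namespace ProbabilityTheory

section Trivial

variable {Ω : Type*} {m m' m0 : MeasurableSpace Ω} {μ : Measure Ω} [IsProbabilityMeasure μ]

theorem indep_of_measure_eq_zero_or_one (hm : m ≤ m0)
    (h : ∀ s, MeasurableSet[m] s → μ s = 0 ∨ μ s = 1) : Indep m' m μ := by
  rw [Indep_iff]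
  intro t₁ t₂ _ ht₂
  rcases h t₂ ht₂ with h₀ | h₁
  · rw [measure_mono_null Set.inter_subset_right h₀, h₀, mul_zero]
  · rw [measure_inter_conull ((prob_compl_eq_zero_iff (hm _ ht₂)).2 h₁), h₁, mul_one]

theorem condExp_ae_eq_integral_of_measure_eq_zero_or_one (hm : m ≤ m0)
    (h : ∀ s, MeasurableSet[m] s → μ s = 0 ∨ μ s = 1) (f : Ω → ℝ) :
    μ[f|m] =ᵐ[μ] fun _ => ∫ ω, f ω ∂μ := by
  have := condExp_indep_eq hm hm stronglyMeasurable_condExp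
    (indep_of_measure_eq_zero_or_one hm h) (f := μ[f|m])
  rwa [condExp_of_stronglyMeasurable hm stronglyMeasurable_condExp integrable_condExp,
    integral_condExp hm] at this

end Trivial

section Kurtosis

variable {Ω : Type*} {m m₁ m₂ m0 : MeasurableSpace Ω} {μ : Measure Ω}

/-- The realized-kurtosis summand, in terms of `a = ΔM_j`, `v = ΔM⁽²⁾_j` and `w = ΔM⁽³⁾_j`. -/
def kurtosisSummand (a v w : ℝ) : ℝ := a ^ 4 + 6 * a ^ 2 * v + 4 * a * w + 3 * v ^ 2

/-- With `X = M_T - M_t` and `m = ℱ_t` this is `E[(M_T - M_t)⁴] - 3 E[(M⁽²⁾_t)²]`, the potential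
in which the expected realized-kurtosis summands telescope. -/
noncomputable def kurtosisPotential (μ : Measure Ω) (m : MeasurableSpace Ω) (X : Ω → ℝ) : ℝ :=
  ∫ ω, X ω ^ 4 ∂μ - 3 * ∫ ω, μ[X ^ 2|m] ω ^ 2 ∂μ

theorem integrable_kurtosisSummand {a v w : Ω → ℝ} (ha : MemLp a 4 μ) (hv : MemLp v 2 μ)
    (hw : MemLp w (4 / 3) μ) : Integrable (fun ω => kurtosisSummand (a ω) (v ω) (w ω)) μ := by
  have h4 := ha.integrable_pow_four
  have h2 := ha.sq_of_four.integrable_mul hv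
  have h3 := ha.integrable_mul hw
  have h1 := hv.integrable_mul hv
  refine (((h4.add (h2.const_mul 6)).add (h3.const_mul 4)).add (h1.const_mul 3)).congr
    (.of_forall fun ω => ?_)
  simp only [kurtosisSummand, Pi.add_apply, Pi.mul_apply, Pi.pow_apply]
  ring

theorem kurtosisPotential_zero : kurtosisPotential μ m 0 = 0 := by
  simp [kurtosisPotential]

theorem kurtosisPotential_of_measure_eq_zero_or_one [IsProbabilityMeasure μ] (hm : m ≤ m0)
    (h : ∀ s, MeasurableSet[m] s → μ s = 0 ∨ μ s = 1) (X : Ω → ℝ) :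
    kurtosisPotential μ m X = ∫ ω, X ω ^ 4 ∂μ - 3 * (∫ ω, X ω ^ 2 ∂μ) ^ 2 := by
  have hV : ∫ ω, μ[X ^ 2|m] ω ^ 2 ∂μ = ∫ _, (∫ ω, X ω ^ 2 ∂μ) ^ 2 ∂μ := integral_congr_ae
    ((condExp_ae_eq_integral_of_measure_eq_zero_or_one hm h (X ^ 2)).fun_comp (· ^ 2))
  rw [kurtosisPotential, hV]
  simp

variable [IsFiniteMeasure μ] {A Q : Ω → ℝ}

theorem integral_add_pow_four_of_condExp_eq_zero (hm : m ≤ m0) (hA : MemLp A 4 μ)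
    (hQ : MemLp Q 4 μ) (hAm : StronglyMeasurable[m] A) (hQ0 : μ[Q|m] =ᵐ[μ] 0) :
    ∫ ω, (A ω + Q ω) ^ 4 ∂μ = ∫ ω, A ω ^ 4 ∂μ + 6 * ∫ ω, A ω ^ 2 * μ[Q ^ 2|m] ω ∂μ
      + 4 * ∫ ω, A ω * μ[Q ^ 3|m] ω ∂μ + ∫ ω, Q ω ^ 4 ∂μ := by
  have hA3Q : Integrable (fun ω => A ω ^ 3 * Q ω) μ := hA.cube_of_four.integrable_mul hQ
  have hA2Q2 : Integrable (fun ω => A ω ^ 2 * Q ω ^ 2) μ :=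
    hA.sq_of_four.integrable_mul hQ.sq_of_four
  have hAQ3 : Integrable (fun ω => A ω * Q ω ^ 3) μ := hA.integrable_mul hQ.cube_of_four
  have hA4 : Integrable (fun ω => A ω ^ 4) μ := hA.integrable_pow_four
  have hQ4 : Integrable (fun ω => Q ω ^ 4) μ := hQ.integrable_pow_four
  have odd : ∫ ω, A ω ^ 3 * Q ω ∂μ = 0 :=
    integral_mul_eq_zero_of_condExp_eq_zero hm (hAm.pow 3) (hQ.integrable (by norm_num)) hA3Q hQ0
  have even : ∫ ω, A ω ^ 2 * μ[Q ^ 2|m] ω ∂μ = ∫ ω, A ω ^ 2 * Q ω ^ 2 ∂μ :=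
    integral_mul_condExp hm (hAm.pow 2) (hQ.sq_of_four.integrable one_le_two) hA2Q2
  have cube : ∫ ω, A ω * μ[Q ^ 3|m] ω ∂μ = ∫ ω, A ω * Q ω ^ 3 ∂μ :=
    integral_mul_condExp hm hAm (hQ.cube_of_four.integrable ENNReal.one_le_four_div_three) hAQ3
  have expand : ∫ ω, (A ω + Q ω) ^ 4 ∂μ = ∫ ω, (A ω ^ 4 + 4 * (A ω ^ 3 * Q ω)
      + 6 * (A ω ^ 2 * Q ω ^ 2) + 4 * (A ω * Q ω ^ 3) + Q ω ^ 4) ∂μ := by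
    congr 1 with ω; ring
  simp (disch := fun_prop) only [integral_add, integral_const_mul] at expand
  rw [expand, even, cube, odd]
  ring

theorem integral_mul_add_sq_of_condExp_eq_zero (hm : m ≤ m0) {g : Ω → ℝ} (hg : MemLp g 2 μ)
    (hgm : StronglyMeasurable[m] g) (hA : MemLp A 4 μ) (hQ : MemLp Q 4 μ)
    (hAm : StronglyMeasurable[m] A) (hQ0 : μ[Q|m] =ᵐ[μ] 0) :
    ∫ ω, g ω * (A ω + Q ω) ^ 2 ∂μ
      = ∫ ω, g ω * A ω ^ 2 ∂μ + ∫ ω, g ω * μ[Q ^ 2|m] ω ∂μ := by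
  have hgA2 : Integrable (fun ω => g ω * A ω ^ 2) μ := hg.integrable_mul hA.sq_of_four
  have hgAQ : Integrable (fun ω => g ω * A ω * Q ω) μ :=
    (hA.mul (r := 4 / 3) hg).integrable_mul hQ
  have hgQ2 : Integrable (fun ω => g ω * Q ω ^ 2) μ := hg.integrable_mul hQ.sq_of_four
  have cross : ∫ ω, g ω * A ω * Q ω ∂μ = 0 :=
    integral_mul_eq_zero_of_condExp_eq_zero hm (hgm.mul hAm) (hQ.integrable (by norm_num))
      hgAQ hQ0
  have sq : ∫ ω, g ω * μ[Q ^ 2|m] ω ∂μ = ∫ ω, g ω * Q ω ^ 2 ∂μ :=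
    integral_mul_condExp hm hgm (hQ.sq_of_four.integrable one_le_two) hgQ2
  have expand : ∫ ω, g ω * (A ω + Q ω) ^ 2 ∂μ
      = ∫ ω, (g ω * A ω ^ 2 + 2 * (g ω * A ω * Q ω) + g ω * Q ω ^ 2) ∂μ := by
    congr 1 with ω; ring
  simp (disch := fun_prop) only [integral_add, integral_const_mul] at expand
  rw [expand, sq, cross]
  ring

theorem integral_kurtosisSummand (h₁₂ : m₁ ≤ m₂) (h₂ : m₂ ≤ m0) (hA : MemLp A 4 μ)
    (hQ : MemLp Q 4 μ) (hAm : StronglyMeasurable[m₂] A) (hA0 : μ[A|m₁] =ᵐ[μ] 0)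
    (hQ0 : μ[Q|m₂] =ᵐ[μ] 0) :
    ∫ ω, kurtosisSummand (A ω) (μ[Q ^ 2|m₂] ω - μ[(A + Q) ^ 2|m₁] ω)
        (μ[Q ^ 3|m₂] ω - μ[(A + Q) ^ 3|m₁] ω) ∂μ
      = kurtosisPotential μ m₁ (A + Q) - kurtosisPotential μ m₂ Q := by
  have hX : MemLp (A + Q) 4 μ := hA.add hQ
  set V₁ := μ[(A + Q) ^ 2|m₁]
  set V₂ := μ[Q ^ 2|m₂]
  set W₁ := μ[(A + Q) ^ 3|m₁]
  set W₂ := μ[Q ^ 3|m₂]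
  have hV₁ : MemLp V₁ 2 μ := hX.sq_of_four.condExp one_le_two
  have hV₂ : MemLp V₂ 2 μ := hQ.sq_of_four.condExp one_le_two
  have hW₁ : MemLp W₁ (4 / 3) μ := hX.cube_of_four.condExp ENNReal.one_le_four_div_three
  have hW₂ : MemLp W₂ (4 / 3) μ := hQ.cube_of_four.condExp ENNReal.one_le_four_div_three
  have fourth := integral_add_pow_four_of_condExp_eq_zero h₂ hA hQ hAm hQ0
  have pythagoras := integral_mul_add_sq_of_condExp_eq_zero h₂ hV₁
    (stronglyMeasurable_condExp.mono h₁₂) hA hQ hAm hQ0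
  have proj : ∫ ω, V₁ ω ^ 2 ∂μ = ∫ ω, V₁ ω * (A ω + Q ω) ^ 2 ∂μ := by
    simp only [sq (V₁ _)]
    exact integral_mul_condExp (h₁₂.trans h₂) stronglyMeasurable_condExp
      (hX.sq_of_four.integrable one_le_two) (hV₁.integrable_mul hX.sq_of_four)
  have orth : ∫ ω, W₁ ω * A ω ∂μ = 0 :=
    integral_mul_eq_zero_of_condExp_eq_zero (h₁₂.trans h₂) stronglyMeasurable_condExp
      (hA.integrable (by norm_num)) (hW₁.integrable_mul hA) hA0
  have hA4 : Integrable (fun ω => A ω ^ 4) μ := hA.integrable_pow_four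
  have hA2V₂ : Integrable (fun ω => A ω ^ 2 * V₂ ω) μ := hA.sq_of_four.integrable_mul hV₂
  have hV₁A2 : Integrable (fun ω => V₁ ω * A ω ^ 2) μ := hV₁.integrable_mul hA.sq_of_four
  have hAW₂ : Integrable (fun ω => A ω * W₂ ω) μ := hA.integrable_mul hW₂
  have hW₁A : Integrable (fun ω => W₁ ω * A ω) μ := hW₁.integrable_mul hA
  have hV₁V₂ : Integrable (fun ω => V₁ ω * V₂ ω) μ := hV₁.integrable_mul hV₂
  have hV₁2 : Integrable (fun ω => V₁ ω ^ 2) μ := hV₁.integrable_sq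
  have hV₂2 : Integrable (fun ω => V₂ ω ^ 2) μ := hV₂.integrable_sq
  have expand : ∫ ω, kurtosisSummand (A ω) (V₂ ω - V₁ ω) (W₂ ω - W₁ ω) ∂μ
      = ∫ ω, (A ω ^ 4 + 6 * (A ω ^ 2 * V₂ ω) - 6 * (V₁ ω * A ω ^ 2) + 4 * (A ω * W₂ ω)
        - 4 * (W₁ ω * A ω) + 3 * V₂ ω ^ 2 - 6 * (V₁ ω * V₂ ω) + 3 * V₁ ω ^ 2) ∂μ := by
    congr 1 with ω; simp only [kurtosisSummand]; ring
  simp (disch := fun_prop) only [integral_add, integral_sub, integral_const_mul] at expand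
  simp only [kurtosisPotential, Pi.add_apply]
  rw [expand, fourth, proj, pythagoras, orth]
  ring

end Kurtosis

end ProbabilityTheory

namespace MeasureTheory.Martingale

variable {Ω ι : Type*} [Preorder ι] {m0 : MeasurableSpace Ω} {μ : Measure Ω}
  {F : Filtration ι m0} {M : ι → Ω → ℝ}

theorem memLp_of_le (hM : Martingale M F μ) {p : ℝ≥0∞} (hp : 1 ≤ p) {s t : ι} (hst : s ≤ t)
    (ht : MemLp (M t) p μ) : MemLp (M s) p μ :=
  (ht.condExp hp).ae_eq (hM.condExp_ae_eq hst)

theorem integrable_kurtosisSummand (hM : Martingale M F μ) {s u T : ι} (hsu : s ≤ u)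
    (huT : u ≤ T) (hM4 : MemLp (M T) 4 μ) :
    Integrable (fun ω => kurtosisSummand (M u ω - M s ω)
        (μ[(M T - M u) ^ 2|F u] ω - μ[(M T - M s) ^ 2|F s] ω)
        (μ[(M T - M u) ^ 3|F u] ω - μ[(M T - M s) ^ 3|F s] ω)) μ := by
  have hMu := hM.memLp_of_le (by norm_num) huT hM4
  have hMs := hM.memLp_of_le (by norm_num) (hsu.trans huT) hM4
  have hQu := hM4.sub hMu
  have hQs := hM4.sub hMs
  exact ProbabilityTheory.integrable_kurtosisSummand (hMu.sub hMs)
    ((hQu.sq_of_four.condExp one_le_two).sub (hQs.sq_of_four.condExp one_le_two))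
    ((hQu.cube_of_four.condExp ENNReal.one_le_four_div_three).sub
      (hQs.cube_of_four.condExp ENNReal.one_le_four_div_three))

variable [IsFiniteMeasure μ]

theorem condExp_sub_ae_eq_zero (hM : Martingale M F μ) {s t : ι} (hst : s ≤ t) :
    μ[M t - M s|F s] =ᵐ[μ] 0 := by
  filter_upwards [condExp_sub (hM.integrable t) (hM.integrable s) (F s), hM.condExp_ae_eq hst]
    with ω h₁ h₂
  rw [h₁, Pi.sub_apply, h₂, condExp_of_stronglyMeasurable (F.le s) (hM.stronglyMeasurable s)
    (hM.integrable s), sub_self, Pi.zero_apply]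

theorem integral_kurtosisSummand (hM : Martingale M F μ) {s u T : ι} (hsu : s ≤ u)
    (huT : u ≤ T) (hM4 : MemLp (M T) 4 μ) :
    ∫ ω, kurtosisSummand (M u ω - M s ω)
        (μ[(M T - M u) ^ 2|F u] ω - μ[(M T - M s) ^ 2|F s] ω)
        (μ[(M T - M u) ^ 3|F u] ω - μ[(M T - M s) ^ 3|F s] ω) ∂μ
      = kurtosisPotential μ (F s) (M T - M s) - kurtosisPotential μ (F u) (M T - M u) := by
  have hMu := hM.memLp_of_le (by norm_num) huT hM4
  have hMs := hM.memLp_of_le (by norm_num) (hsu.trans huT) hM4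
  have h := ProbabilityTheory.integral_kurtosisSummand (F.mono hsu) (F.le u) (hMu.sub hMs)
    (hM4.sub hMu) ((hM.stronglyMeasurable u).sub ((hM.stronglyMeasurable s).mono (F.mono hsu)))
    (hM.condExp_sub_ae_eq_zero hsu) (hM.condExp_sub_ae_eq_zero huT)
  rwa [sub_add_sub_cancel'] at h

theorem integral_sum_kurtosisSummand (hM : Martingale M F μ) {T : ι} (hM4 : MemLp (M T) 4 μ)
    {N : ℕ} {τ : ℕ → ι} (hτ : MonotoneOn τ (Set.Iic N)) (hτN : τ N ≤ T) :
    ∫ ω, ∑ j ∈ Finset.range N, kurtosisSummand (M (τ (j + 1)) ω - M (τ j) ω)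
        (μ[(M T - M (τ (j + 1))) ^ 2|F (τ (j + 1))] ω - μ[(M T - M (τ j)) ^ 2|F (τ j)] ω)
        (μ[(M T - M (τ (j + 1))) ^ 3|F (τ (j + 1))] ω - μ[(M T - M (τ j)) ^ 3|F (τ j)] ω) ∂μ
      = kurtosisPotential μ (F (τ 0)) (M T - M (τ 0))
        - kurtosisPotential μ (F (τ N)) (M T - M (τ N)) := by
  have step : ∀ j ∈ Finset.range N, τ j ≤ τ (j + 1) ∧ τ (j + 1) ≤ T := fun j hj => by
    have hj : j + 1 ≤ N := Finset.mem_range.1 hj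
    exact ⟨hτ (Set.mem_Iic.2 (by omega)) (Set.mem_Iic.2 hj) (by omega),
      (hτ (Set.mem_Iic.2 hj) (Set.mem_Iic.2 le_rfl) hj).trans hτN⟩
  rw [integral_finsetSum _ fun j hj =>
      hM.integrable_kurtosisSummand (step j hj).1 (step j hj).2 hM4,
    Finset.sum_congr rfl fun j hj => hM.integral_kurtosisSummand (step j hj).1 (step j hj).2 hM4]
  exact Finset.sum_range_sub' _ N

end MeasureTheory.Martingale

theorem realized_kurtosis_general {Ω : Type*} {m0 : MeasurableSpace Ω}
    (μ : Measure Ω) [IsProbabilityMeasure μ] (T : ℝ)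
    (F : Filtration ℝ m0)
    (hF0 : ∀ s : Set Ω, MeasurableSet[F 0] s → μ s = 0 ∨ μ s = 1)
    (M : ℝ → Ω → ℝ) (hM : Martingale M F μ) (hM4 : MemLp (M T) 4 μ)
    (N : ℕ) (τ : ℕ → ℝ) (hτ0 : τ 0 = 0) (hτN : τ N = T)
    (hτ : ∀ j < N, τ j < τ (j + 1)) :
    ∫ ω, (∑ j ∈ Finset.range N,
        ((M (τ (j + 1)) ω - M (τ j) ω) ^ 4 +
          6 * (M (τ (j + 1)) ω - M (τ j) ω) ^ 2 *
            ((μ[(fun ω' => (M T ω' - M (τ (j + 1)) ω') ^ 2)|F (τ (j + 1))]) ω -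
              (μ[(fun ω' => (M T ω' - M (τ j) ω') ^ 2)|F (τ j)]) ω) +
          4 * (M (τ (j + 1)) ω - M (τ j) ω) *
            ((μ[(fun ω' => (M T ω' - M (τ (j + 1)) ω') ^ 3)|F (τ (j + 1))]) ω -
              (μ[(fun ω' => (M T ω' - M (τ j) ω') ^ 3)|F (τ j)]) ω) +
          3 * ((μ[(fun ω' => (M T ω' - M (τ (j + 1)) ω') ^ 2)|F (τ (j + 1))]) ω -
              (μ[(fun ω' => (M T ω' - M (τ j) ω') ^ 2)|F (τ j)]) ω) ^ 2)) ∂μ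
      = (∫ ω, (M T ω - M 0 ω) ^ 4 ∂μ) - 3 * (∫ ω, (M T ω - M 0 ω) ^ 2 ∂μ) ^ 2 := by
  have hmono : MonotoneOn τ (Set.Iic N) :=
    monotoneOn_of_le_succ Set.ordConnected_Iic fun j _ _ hj => by
      rw [Order.succ_eq_add_one] at hj ⊢
      exact (hτ j (Nat.lt_of_succ_le hj)).le
  have h := hM.integral_sum_kurtosisSummand hM4 hmono hτN.le
  rw [hτ0, hτN, sub_self (M T), kurtosisPotential_zero, sub_zero,
    kurtosisPotential_of_measure_eq_zero_or_one (F.le 0) hF0] at h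
  exact h

/-- Realized kurtosis (Bae–Lee): for an `L⁴` martingale `M` on `[0,T]` with trivial `ℱ_0`,
`M⁽²⁾_t = E[(M_T − M_t)²|ℱ_t]`, `M⁽³⁾_t = E[(M_T − M_t)³|ℱ_t]`, and any partition
`0 = t_0 < ⋯ < t_N = T`,
`E[∑_j {(ΔM_j)⁴ + 6 (ΔM_j)² ΔM⁽²⁾_j + 4 ΔM_j ΔM⁽³⁾_j + 3 (ΔM⁽²⁾_j)²}]
  = E[(M_T − M_0)⁴] − 3 (E[(M_T − M_0)²])²`,
the fourth cumulant of `M_T − M_0`. -/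
theorem realized_kurtosis {Ω : Type*} {m0 : MeasurableSpace Ω}
    (μ : Measure Ω) [IsProbabilityMeasure μ] (T : ℝ) (hT : 0 < T)
    (F : Filtration ℝ m0)
    (hF0 : ∀ s : Set Ω, MeasurableSet[F 0] s → μ s = 0 ∨ μ s = 1)
    (M : ℝ → Ω → ℝ) (hM : Martingale M F μ) (hM4 : MemLp (M T) 4 μ)
    (N : ℕ) (hN : 1 ≤ N) (τ : ℕ → ℝ) (hτ0 : τ 0 = 0) (hτN : τ N = T)
    (hτ : ∀ j < N, τ j < τ (j + 1)) :
    ∫ ω, (∑ j ∈ Finset.range N,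
        ((M (τ (j + 1)) ω - M (τ j) ω) ^ 4 +
          6 * (M (τ (j + 1)) ω - M (τ j) ω) ^ 2 *
            ((μ[(fun ω' => (M T ω' - M (τ (j + 1)) ω') ^ 2)|F (τ (j + 1))]) ω -
              (μ[(fun ω' => (M T ω' - M (τ j) ω') ^ 2)|F (τ j)]) ω) +
          4 * (M (τ (j + 1)) ω - M (τ j) ω) *
            ((μ[(fun ω' => (M T ω' - M (τ (j + 1)) ω') ^ 3)|F (τ (j + 1))]) ω -
              (μ[(fun ω' => (M T ω' - M (τ j) ω') ^ 3)|F (τ j)]) ω) +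
          3 * ((μ[(fun ω' => (M T ω' - M (τ (j + 1)) ω') ^ 2)|F (τ (j + 1))]) ω -
              (μ[(fun ω' => (M T ω' - M (τ j) ω') ^ 2)|F (τ j)]) ω) ^ 2)) ∂μ
      = (∫ ω, (M T ω - M 0 ω) ^ 4 ∂μ) - 3 * (∫ ω, (M T ω - M 0 ω) ^ 2 ∂μ) ^ 2 :=
  realized_kurtosis_general μ T F hF0 M hM hM4 N τ hτ0 hτN hτ
end
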